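/- arXiv:2010.15088 — 3 statements merged into one kernel-verified Lean document; each statement's English description precedes it below -/
import Mathlib

section
/- Let N, d ≥ 1, B > 0, ε ≥ 0, let W ∈ ℝ^{N×N} be doubly stochastic with ‖W − (1/N)𝟙𝟙ᵀ‖_* ≤ 1, let Θ ∈ ℝ^{N×d} have rows θ_1,…,θ_N with row average θ̄, and let G ∈ ℝ^{N×d} have rows g_1,…,g_N satisfying ‖g_i‖ ≤ B(‖θ_i‖ + 1) for every i. Set Θ' = WΘ + εG with row average θ̄'. Then ‖Θ' − 𝟙(θ̄')ᵀ‖_F ≤ (1 + εNB)‖Θ − 𝟙θ̄ᵀ‖_F + εNB‖θ̄‖ + εNB. -/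
/-- Euclidean norm of a vector in `ℝ^d` given as a plain function. -/
noncomputable def euclNorm {d : ℕ} (v : Fin d → ℝ) : ℝ :=
  ‖(WithLp.equiv 2 (Fin d → ℝ)).symm v‖

/-- Frobenius norm of a matrix. -/
noncomputable def frobNorm {N d : ℕ} (M : Matrix (Fin N) (Fin d) ℝ) : ℝ :=
  Real.sqrt (∑ i, ∑ j, (M i j) ^ 2)

/-- Spectral (ℓ₂ operator) norm of a square matrix. -/
noncomputable def specNorm {N : ℕ} (M : Matrix (Fin N) (Fin N) ℝ) : ℝ :=
  ‖Matrix.toEuclideanCLM (𝕜 := ℝ) M‖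

/-- A matrix is doubly stochastic: nonnegative entries, all row sums and column sums equal 1. -/
def DoublyStochastic {N : ℕ} (W : Matrix (Fin N) (Fin N) ℝ) : Prop :=
  (∀ i j, 0 ≤ W i j) ∧ (∀ i, ∑ j, W i j = 1) ∧ (∀ j, ∑ i, W i j = 1)

/-- Row average of a matrix `Θ ∈ ℝ^{N×d}`: `θ̄ = (1/N) Θᵀ 𝟙`. -/
noncomputable def rowAvg {N d : ℕ} (Θ : Matrix (Fin N) (Fin d) ℝ) : Fin d → ℝ :=
  fun j => (N : ℝ)⁻¹ * ∑ i, Θ i j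

/-!
Write `J = (1/N) 𝟙𝟙ᵀ` (`avgMatrix N`), so that `JΘ = 𝟙θ̄ᵀ` and the consensus error is `Θ - JΘ`. Double
stochasticity gives `WJ = JW = J = J²`, whence
`Θ' - JΘ' = (W - J)(Θ - JΘ) + ε (G - JG)`. The first term is bounded by the spectral norm of
`W - J` times the Frobenius norm of `Θ - JΘ`; centering does not increase the Frobenius norm, and
the row-wise growth bound gives `‖G‖_F ≤ B (‖Θ‖_F + √N)` with `‖Θ‖_F ≤ ‖Θ - JΘ‖_F + √N ‖θ̄‖`.
-/

open Matrix WithLp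

attribute [local instance] Matrix.frobeniusNormedAddCommGroup Matrix.frobeniusNormedSpace

section Frobenius

variable {m n : Type*} [Fintype m] [Fintype n]

lemma PiLp.norm_toLp_two_const (c : ℝ) :
    ‖toLp 2 (Function.const m c)‖ = √(Fintype.card m) * ‖c‖ := by
  rw [PiLp.norm_toLp_const (by simp), Real.sqrt_eq_rpow]
  norm_num

lemma Matrix.frobenius_norm_eq_norm_row_norms (A : Matrix m n ℝ) :
    ‖A‖ = ‖toLp 2 fun i => ‖toLp 2 (A i)‖‖ := by
  change ‖toLp 2 fun i => toLp 2 (A i)‖ = _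
  simp [PiLp.norm_eq_of_L2]

lemma Matrix.frobenius_norm_le_of_row_norm_le {A : Matrix m n ℝ} {r : m → ℝ}
    (h : ∀ i, ‖toLp 2 (A i)‖ ≤ r i) : ‖A‖ ≤ ‖toLp 2 r‖ := by
  rw [frobenius_norm_eq_norm_row_norms, PiLp.norm_eq_of_L2, PiLp.norm_eq_of_L2]
  refine Real.sqrt_le_sqrt (Finset.sum_le_sum fun i _ => pow_le_pow_left₀ (norm_nonneg _) ?_ 2)
  simpa using (h i).trans (le_abs_self _)

lemma Matrix.frobenius_norm_replicateRow_eq_sqrt_card_mul (v : n → ℝ) :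
    ‖replicateRow m v‖ = √(Fintype.card m) * ‖toLp 2 v‖ := by
  rw [frobenius_norm_eq_norm_row_norms]
  change ‖toLp 2 (Function.const m ‖toLp 2 v‖)‖ = _
  rw [PiLp.norm_toLp_two_const, norm_norm]

lemma Matrix.frobenius_norm_mul_le_norm_toEuclideanCLM_mul [DecidableEq m]
    (A : Matrix m m ℝ) (D : Matrix m n ℝ) :
    ‖A * D‖ ≤ ‖toEuclideanCLM (𝕜 := ℝ) A‖ * ‖D‖ := by
  set c := ‖toEuclideanCLM (𝕜 := ℝ) A‖
  have hcol (j : n) : ‖toLp 2 ((A * D)ᵀ j)‖ ≤ c * ‖toLp 2 (Dᵀ j)‖ := by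
    have : toLp 2 ((A * D)ᵀ j) = toEuclideanCLM (𝕜 := ℝ) A (toLp 2 (Dᵀ j)) := by
      rw [toEuclideanCLM_toLp]; rfl
    exact this ▸ ContinuousLinearMap.le_opNorm _ _
  calc ‖A * D‖ = ‖(A * D)ᵀ‖ := (frobenius_norm_transpose _).symm
    _ ≤ ‖c • toLp 2 fun j => ‖toLp 2 (Dᵀ j)‖‖ := frobenius_norm_le_of_row_norm_le hcol
    _ = c * ‖D‖ := by
      rw [norm_smul, norm_norm, ← frobenius_norm_eq_norm_row_norms, frobenius_norm_transpose]

lemma Matrix.frobenius_norm_le_of_row_norm_le_mul_add_one {G Θ : Matrix m n ℝ} {B : ℝ}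
    (hB : 0 ≤ B) (h : ∀ i, ‖toLp 2 (G i)‖ ≤ B * (‖toLp 2 (Θ i)‖ + 1)) :
    ‖G‖ ≤ B * (‖Θ‖ + √(Fintype.card m)) := by
  set u := toLp 2 fun i => ‖toLp 2 (Θ i)‖
  set one := toLp 2 (Function.const m (1 : ℝ))
  calc ‖G‖ ≤ ‖B • (u + one)‖ := frobenius_norm_le_of_row_norm_le h
    _ ≤ B * (‖u‖ + ‖one‖) := by
      rw [norm_smul, Real.norm_of_nonneg hB]
      gcongr
      exact norm_add_le _ _
    _ = B * (‖Θ‖ + √(Fintype.card m)) := by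
      rw [PiLp.norm_toLp_two_const, norm_one, mul_one, ← frobenius_norm_eq_norm_row_norms]

end Frobenius

noncomputable def avgMatrix (N : ℕ) : Matrix (Fin N) (Fin N) ℝ :=
  (N : ℝ)⁻¹ • of fun _ _ => 1

noncomputable def consensusError {N d : ℕ} (Θ : Matrix (Fin N) (Fin d) ℝ) :
    Matrix (Fin N) (Fin d) ℝ :=
  Θ - avgMatrix N * Θ

section Consensus

variable {N d : ℕ}

lemma avgMatrix_mul (X : Matrix (Fin N) (Fin d) ℝ) :
    avgMatrix N * X = of fun _ j => rowAvg X j := by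
  ext i j
  simp [avgMatrix, mul_apply, rowAvg, Finset.mul_sum]

lemma avgMatrix_mul_self : avgMatrix N * avgMatrix N = avgMatrix N := by
  ext i j
  have hN : (N : ℝ) ≠ 0 := Nat.cast_ne_zero.mpr i.pos.ne'
  simp [avgMatrix, mul_apply]
  field_simp

lemma DoublyStochastic.avgMatrix_mul {W : Matrix (Fin N) (Fin N) ℝ} (hW : DoublyStochastic W) :
    avgMatrix N * W = avgMatrix N := by
  ext i j
  simp [avgMatrix, mul_apply, ← Finset.mul_sum, hW.2.2 j]

lemma DoublyStochastic.mul_avgMatrix {W : Matrix (Fin N) (Fin N) ℝ} (hW : DoublyStochastic W) :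
    W * avgMatrix N = avgMatrix N := by
  ext i j
  simp [avgMatrix, mul_apply, ← Finset.sum_mul, hW.2.1 i]

lemma DoublyStochastic.consensusError_mul_add_smul {W : Matrix (Fin N) (Fin N) ℝ}
    (hW : DoublyStochastic W) (ε : ℝ) (Θ G : Matrix (Fin N) (Fin d) ℝ) :
    consensusError (W * Θ + ε • G) =
      (W - avgMatrix N) * consensusError Θ + ε • consensusError G := by
  simp only [consensusError, Matrix.mul_add, Matrix.sub_mul, Matrix.mul_sub, Matrix.mul_smul,
    smul_sub, ← Matrix.mul_assoc, hW.avgMatrix_mul, hW.mul_avgMatrix, avgMatrix_mul_self]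
  abel

lemma sum_sq_sub_mean_le (g : Fin N → ℝ) :
    ∑ i, (g i - (N : ℝ)⁻¹ * ∑ k, g k) ^ 2 ≤ ∑ i, g i ^ 2 := by
  set μ := (N : ℝ)⁻¹ * ∑ k, g k
  have hsum : ∑ k, g k = N * μ := by
    rcases N.eq_zero_or_pos with rfl | hN
    · simp
    · simp only [μ]; field_simp
  have hvar : ∑ i, (g i - μ) ^ 2 = ∑ i, g i ^ 2 - N * μ ^ 2 := by
    simp only [sub_sq, Finset.sum_add_distrib, Finset.sum_sub_distrib, ← Finset.sum_mul,
      ← Finset.mul_sum, hsum, Finset.sum_const, Finset.card_univ, Fintype.card_fin, nsmul_eq_mul]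
    ring
  rw [hvar]
  nlinarith [sq_nonneg μ, (N.cast_nonneg : (0 : ℝ) ≤ N)]

lemma frobenius_norm_consensusError_le (G : Matrix (Fin N) (Fin d) ℝ) :
    ‖consensusError G‖ ≤ ‖G‖ := by
  rw [← frobenius_norm_transpose, ← frobenius_norm_transpose G,
    frobenius_norm_eq_norm_row_norms Gᵀ]
  refine frobenius_norm_le_of_row_norm_le fun j => ?_
  rw [PiLp.norm_eq_of_L2, PiLp.norm_eq_of_L2]
  simpa only [consensusError, avgMatrix_mul, rowAvg, Matrix.sub_apply, of_apply, transpose_apply,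
    Real.norm_eq_abs, sq_abs] using Real.sqrt_le_sqrt (sum_sq_sub_mean_le fun i => G i j)

lemma frobenius_norm_le_consensusError_add (Θ : Matrix (Fin N) (Fin d) ℝ) :
    ‖Θ‖ ≤ ‖consensusError Θ‖ + √N * euclNorm (rowAvg Θ) := by
  have hmean : ‖avgMatrix N * Θ‖ = √N * euclNorm (rowAvg Θ) := by
    rw [avgMatrix_mul]
    exact (frobenius_norm_replicateRow_eq_sqrt_card_mul (m := Fin N) _).trans
      (by rw [Fintype.card_fin]; rfl)
  unfold consensusError
  linarith [norm_sub_norm_le Θ (avgMatrix N * Θ)]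

lemma frobNorm_sub_rowAvg_eq (Θ : Matrix (Fin N) (Fin d) ℝ) :
    frobNorm (Θ - of fun _ j => rowAvg Θ j) = ‖consensusError Θ‖ := by
  rw [consensusError, avgMatrix_mul, frobNorm, frobenius_norm_eq_norm_row_norms,
    PiLp.norm_eq_of_L2]
  congr 1
  refine Finset.sum_congr rfl fun i _ => ?_
  rw [norm_norm, PiLp.norm_sq_eq_of_L2]
  simp

end Consensus

theorem consensus_error_frobenius_step_general (N d : ℕ) (hN : 1 ≤ N)
    (B ε : ℝ) (hB : 0 < B) (hε : 0 ≤ ε)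
    (W : Matrix (Fin N) (Fin N) ℝ) (hW : DoublyStochastic W)
    (hWspec : specNorm (W - (N : ℝ)⁻¹ •
      Matrix.of (fun (_ : Fin N) (_ : Fin N) => (1 : ℝ))) ≤ 1)
    (Θ G : Matrix (Fin N) (Fin d) ℝ)
    (hG : ∀ i, euclNorm (fun j => G i j) ≤ B * (euclNorm (fun j => Θ i j) + 1))
    (Θ' : Matrix (Fin N) (Fin d) ℝ) (hΘ' : Θ' = W * Θ + ε • G) :
    frobNorm (Θ' - Matrix.of (fun _ j => rowAvg Θ' j))
      ≤ (1 + ε * N * B) * frobNorm (Θ - Matrix.of (fun _ j => rowAvg Θ j))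
        + ε * N * B * euclNorm (rowAvg Θ) + ε * N * B := by
  set D := consensusError Θ
  set θbar := euclNorm (rowAvg Θ)
  have hN1 : (1 : ℝ) ≤ N := Nat.one_le_cast.mpr hN
  have hGΘ : ‖G‖ ≤ B * (‖Θ‖ + √N) := by
    simpa using frobenius_norm_le_of_row_norm_le_mul_add_one hB.le hG
  have hstep : ‖consensusError Θ'‖ ≤ ‖D‖ + ε * ‖G‖ := by
    rw [hΘ', hW.consensusError_mul_add_smul, ← one_mul ‖D‖]
    refine (norm_add_le _ _).trans ?_
    rw [norm_smul, Real.norm_of_nonneg hε]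
    gcongr
    · exact (frobenius_norm_mul_le_norm_toEuclideanCLM_mul _ _).trans
        (mul_le_mul_of_nonneg_right hWspec (norm_nonneg _))
    · exact frobenius_norm_consensusError_le G
  rw [frobNorm_sub_rowAvg_eq, frobNorm_sub_rowAvg_eq]
  calc ‖consensusError Θ'‖ ≤ ‖D‖ + ε * (B * (‖D‖ + √N * θbar + √N)) := by
        refine hstep.trans ?_
        gcongr
        exact hGΘ.trans (by gcongr; exact frobenius_norm_le_consensusError_add Θ)
    _ ≤ ‖D‖ + ε * (B * (N * ‖D‖ + N * θbar + N)) := by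
        have : 0 ≤ θbar := norm_nonneg _
        have hsqrt : √N ≤ N := Real.sqrt_le_self_iff.mpr (Or.inr hN1)
        gcongr
        exact le_mul_of_one_le_left (norm_nonneg _) hN1
    _ = _ := by ring

/-- One-step bound on the Frobenius norm of the consensus error:
`‖Θ' − 𝟙(θ̄')ᵀ‖_F ≤ (1 + εNB)‖Θ − 𝟙θ̄ᵀ‖_F + εNB‖θ̄‖ + εNB`. -/
theorem consensus_error_frobenius_step (N d : ℕ) (hN : 1 ≤ N) (hd : 1 ≤ d)
    (B ε : ℝ) (hB : 0 < B) (hε : 0 ≤ ε)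
    (W : Matrix (Fin N) (Fin N) ℝ) (hW : DoublyStochastic W)
    (hWspec : specNorm (W - (N : ℝ)⁻¹ •
      Matrix.of (fun (_ : Fin N) (_ : Fin N) => (1 : ℝ))) ≤ 1)
    (Θ G : Matrix (Fin N) (Fin d) ℝ)
    (hG : ∀ i, euclNorm (fun j => G i j) ≤ B * (euclNorm (fun j => Θ i j) + 1))
    (Θ' : Matrix (Fin N) (Fin d) ℝ) (hΘ' : Θ' = W * Θ + ε • G) :
    frobNorm (Θ' - Matrix.of (fun _ j => rowAvg Θ' j))
      ≤ (1 + ε * N * B) * frobNorm (Θ - Matrix.of (fun _ j => rowAvg Θ j))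
        + ε * N * B * euclNorm (rowAvg Θ) + ε * N * B :=
  consensus_error_frobenius_step_general N d hN B ε hB hε W hW hWspec Θ G hG Θ' hΘ'
end

section
/- Let N, d ≥ 1, B > 0, L > 0, α > 0, ε ≥ 0, τ ≥ 1 a natural number with 6NBτε ≤ 1, and θ* ∈ ℝ^d. Let θ_1,…,θ_N ∈ ℝ^d with average θ̄ and consensus error S = ∑_i ‖θ_i − θ̄‖², and let θ'_1,…,θ'_N ∈ ℝ^d with average θ̄' and consensus error S' = ∑_i ‖θ'_i − θ̄'‖². Assume ‖θ̄ − θ̄'‖ ≤ 3εBτ(‖θ̄‖ + √(S') + 1), and let w_1,…,w_N ∈ ℝ^d satisfy ‖w_i‖ ≤ L(‖θ_i − θ̄‖ + ‖θ'_i − θ̄'‖ + ‖θ̄ − θ̄'‖) for all i. Then, writing R = ‖θ̄ − θ*‖², one has ⟨θ̄' − θ*, ∑_{i=1}^N w_i⟩ ≤ 48ετNBL·R + (α/2)R + (NL²/α + L/2) S + (4NL²/α + 5L) S' + (45ετNBL/2)(2‖θ*‖² + 1). -/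
/-- Euclidean inner product of two vectors in `ℝ^d` given as plain functions. -/
noncomputable def edot {d : ℕ} (u v : Fin d → ℝ) : ℝ :=
  inner ℝ ((WithLp.equiv 2 (Fin d → ℝ)).symm u) ((WithLp.equiv 2 (Fin d → ℝ)).symm v)

/-! Cauchy–Schwarz bounds the inner product by `(R₀ + E) · L (∑ ‖θᵢ - θ̄‖ + ∑ ‖θ'ᵢ - θ̄'‖ + N E)`
with `R₀ = ‖θ̄ - θ*‖` and `E = ‖θ̄ - θ̄'‖`. The two consensus sums are at most `√(N S)` and
`√(N S')`, and Young's inequality splits their products with `R₀` and `E`. What is left is of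
order `N L (R₀ E + E²)`; the drift bound `E ≤ c (R₀ + ‖θ*‖ + √S' + 1)` with `c = 3εBτ ≤ 1/(2N)`
turns it into `O(N L c (R₀² + ‖θ*‖² + S' + 1))`, and `N L c ≤ L/2` absorbs the `S'` part. -/

open Finset RealInnerProductSpace

lemma mul_le_young {α : ℝ} (hα : 0 < α) (x y : ℝ) :
    x * y ≤ α / 4 * x ^ 2 + y ^ 2 / α := by
  rw [← sub_nonneg]
  have key : α / 4 * x ^ 2 + y ^ 2 / α - x * y = (α * x - 2 * y) ^ 2 / (4 * α) := by
    field_simp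
    ring
  rw [key]
  positivity

/-- Young's inequality with weight `α` against `R₀` and with weight `2N` against `E`. -/
lemma consensus_term_le {N L α R₀ E A S : ℝ} (hN : 0 < N) (hL : 0 ≤ L) (hα : 0 < α)
    (hA : A ^ 2 ≤ N * S) :
    L * (R₀ + E) * A ≤ α / 4 * R₀ ^ 2 + (N * L ^ 2 / α + L / 2) * S + N * L / 2 * E ^ 2 := by
  have hR₀ : R₀ * (L * A) ≤ α / 4 * R₀ ^ 2 + N * L ^ 2 / α * S := by
    have h : (L * A) ^ 2 / α ≤ N * L ^ 2 / α * S := by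
      rw [mul_pow, div_mul_eq_mul_div]
      refine div_le_div_of_nonneg_right ?_ hα.le
      nlinarith [mul_le_mul_of_nonneg_left hA (sq_nonneg L)]
    linarith [mul_le_young hα R₀ (L * A)]
  have hE : E * A ≤ N / 2 * E ^ 2 + S / 2 := by
    have h : A ^ 2 / (2 * N) ≤ S / 2 := by
      rw [div_le_iff₀ (by positivity)]
      linarith
    linarith [mul_le_young (by positivity : 0 < 2 * N) E A]
  nlinarith [mul_le_mul_of_nonneg_left hE hL]

lemma drift_terms_le {N L c R₀ E P Q : ℝ} (hN : 1 ≤ N) (hL : 0 ≤ L) (hc : 0 ≤ c)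
    (hcN : 2 * N * c ≤ 1) (hR₀ : 0 ≤ R₀) (hE₀ : 0 ≤ E)
    (hE : E ≤ c * (R₀ + P + Q + 1)) :
    N * L * R₀ * E + 2 * N * L * E ^ 2
      ≤ 13 / 2 * (N * L * c) * (R₀ ^ 2 + P ^ 2 + Q ^ 2 + 1) := by
  set M := R₀ + P + Q + 1
  set K := R₀ ^ 2 + P ^ 2 + Q ^ 2 + 1
  have hc_half : 2 * c ≤ 1 := by nlinarith
  have hRM : R₀ * M ≤ 5 / 2 * K := by
    nlinarith [sq_nonneg (R₀ - P), sq_nonneg (R₀ - Q), sq_nonneg (R₀ - 1)]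
  have hM2 : M ^ 2 ≤ 4 * K := by
    nlinarith [sq_nonneg (R₀ - P), sq_nonneg (R₀ - Q), sq_nonneg (R₀ - 1),
      sq_nonneg (P - Q), sq_nonneg (P - 1), sq_nonneg (Q - 1)]
  have hE2 : E ^ 2 ≤ c * M ^ 2 / 2 := by
    have h : E ^ 2 ≤ (c * M) ^ 2 := pow_le_pow_left₀ hE₀ hE 2
    nlinarith [mul_le_mul_of_nonneg_right hc_half (by positivity : 0 ≤ c * M ^ 2)]
  calc N * L * R₀ * E + 2 * N * L * E ^ 2
      ≤ N * L * c * (R₀ * M) + N * L * c * M ^ 2 := by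
        have h₁ := mul_le_mul_of_nonneg_left hE (by positivity : 0 ≤ N * L * R₀)
        have h₂ := mul_le_mul_of_nonneg_left hE2 (by positivity : 0 ≤ 2 * N * L)
        nlinarith
    _ ≤ N * L * c * (5 / 2 * K) + N * L * c * (4 * K) := by gcongr
    _ = 13 / 2 * (N * L * c) * K := by ring

lemma cross_terms_scalar_le {N L α c R₀ E A A' P Q S S' : ℝ} (hN : 1 ≤ N) (hL : 0 ≤ L)
    (hα : 0 < α) (hc : 0 ≤ c) (hcN : 2 * N * c ≤ 1) (hR₀ : 0 ≤ R₀) (hE₀ : 0 ≤ E)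
    (hA : A ^ 2 ≤ N * S) (hA' : A' ^ 2 ≤ N * S') (hQS' : Q ^ 2 ≤ S')
    (hE : E ≤ c * (R₀ + P + Q + 1)) :
    (R₀ + E) * (L * (A + A' + N * E))
      ≤ 16 * N * L * c * R₀ ^ 2 + α / 2 * R₀ ^ 2 + (N * L ^ 2 / α + L / 2) * S
        + (4 * N * L ^ 2 / α + 5 * L) * S' + 15 / 2 * N * L * c * (2 * P ^ 2 + 1) := by
  have hN₀ : 0 < N := by linarith
  have hA_le := consensus_term_le (R₀ := R₀) (E := E) hN₀ hL hα hA
  have hA'_le := consensus_term_le (R₀ := R₀) (E := E) hN₀ hL hα hA'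
  have hdrift := drift_terms_le hN hL hc hcN hR₀ hE₀ hE
  have hNLc : 0 ≤ N * L * c := by positivity
  have hNLc_le : N * L * c ≤ L / 2 := by nlinarith
  have hS' : 0 ≤ S' := (sq_nonneg Q).trans hQS'
  have hD : 0 ≤ N * L ^ 2 / α * S' := by positivity
  rw [show 4 * N * L ^ 2 / α = 4 * (N * L ^ 2 / α) by ring]
  linarith [mul_nonneg hNLc (sq_nonneg R₀), mul_nonneg hNLc (sq_nonneg P),
    mul_nonneg (sub_nonneg.2 hNLc_le) (sq_nonneg Q), mul_le_mul_of_nonneg_left hQS' hL,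
    mul_nonneg hL hS']

lemma inner_sum_le_of_norm_le {F ι : Type*} [NormedAddCommGroup F] [InnerProductSpace ℝ F]
    [Fintype ι] (v : F) {w : ι → F} {r : ι → ℝ} (hw : ∀ i, ‖w i‖ ≤ r i) :
    ⟪v, ∑ i, w i⟫ ≤ ‖v‖ * ∑ i, r i :=
  calc ⟪v, ∑ i, w i⟫ ≤ ‖v‖ * ‖∑ i, w i‖ := real_inner_le_norm _ _
    _ ≤ ‖v‖ * ∑ i, r i := by
      gcongr
      exact (norm_sum_le _ _).trans (sum_le_sum fun i _ => hw i)

/-- `x i` and `y i` stand for `θᵢ - θ̄` and `θ'ᵢ - θ̄'`, and `c` for the drift rate `3εBτ`. -/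
theorem inner_cross_terms_le {F ι : Type*} [NormedAddCommGroup F] [InnerProductSpace ℝ F]
    [Fintype ι] [Nonempty ι] {L α c : ℝ} (hL : 0 ≤ L) (hα : 0 < α) (hc : 0 ≤ c)
    (hcN : 2 * Fintype.card ι * c ≤ 1) (θstar θbar θbar' : F) (x y w : ι → F)
    (hdrift : ‖θbar - θbar'‖ ≤ c * (‖θbar‖ + √(∑ i, ‖y i‖ ^ 2) + 1))
    (hw : ∀ i, ‖w i‖ ≤ L * (‖x i‖ + ‖y i‖ + ‖θbar - θbar'‖)) :
    ⟪θbar' - θstar, ∑ i, w i⟫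
      ≤ 16 * Fintype.card ι * L * c * ‖θbar - θstar‖ ^ 2 + α / 2 * ‖θbar - θstar‖ ^ 2
        + (Fintype.card ι * L ^ 2 / α + L / 2) * ∑ i, ‖x i‖ ^ 2
        + (4 * Fintype.card ι * L ^ 2 / α + 5 * L) * ∑ i, ‖y i‖ ^ 2
        + 15 / 2 * Fintype.card ι * L * c * (2 * ‖θstar‖ ^ 2 + 1) := by
  have hN : (1 : ℝ) ≤ Fintype.card ι := by exact_mod_cast Fintype.card_pos
  have hgap : ‖θbar' - θstar‖ ≤ ‖θbar - θstar‖ + ‖θbar - θbar'‖ := by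
    simpa using norm_sub_le (θbar - θstar) (θbar - θbar')
  have hθbar : ‖θbar‖ ≤ ‖θbar - θstar‖ + ‖θstar‖ := norm_le_norm_sub_add θbar θstar
  have hsum : ∑ i, L * (‖x i‖ + ‖y i‖ + ‖θbar - θbar'‖)
      = L * (∑ i, ‖x i‖ + ∑ i, ‖y i‖ + Fintype.card ι * ‖θbar - θbar'‖) := by
    simp only [← mul_sum, sum_add_distrib, sum_const, card_univ, nsmul_eq_mul]
  calc ⟪θbar' - θstar, ∑ i, w i⟫
      ≤ (‖θbar - θstar‖ + ‖θbar - θbar'‖)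
          * (L * (∑ i, ‖x i‖ + ∑ i, ‖y i‖ + Fintype.card ι * ‖θbar - θbar'‖)) := by
        rw [← hsum]
        refine (inner_sum_le_of_norm_le _ hw).trans (mul_le_mul_of_nonneg_right hgap ?_)
        exact sum_nonneg fun i _ => hw i |>.trans' (norm_nonneg _)
    _ ≤ _ := by
        refine cross_terms_scalar_le hN hL hα hc hcN (norm_nonneg _) (norm_nonneg _) ?_ ?_ (Real.sq_sqrt ?_).le ?_
        · simpa using sq_sum_le_card_mul_sum_sq (s := univ) (f := fun i => ‖x i‖)
        · simpa using sq_sum_le_card_mul_sum_sq (s := univ) (f := fun i => ‖y i‖)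
        · positivity
        · linarith [mul_le_mul_of_nonneg_left hθbar hc]

theorem lipschitz_cross_terms_bound_general (N d : ℕ) (hN : 1 ≤ N)
    (B L α ε : ℝ) (hB : 0 < B) (hL : 0 < L) (hα : 0 < α) (hε : 0 ≤ ε)
    (τ : ℕ) (hstep : 6 * N * B * τ * ε ≤ 1)
    (θstar : Fin d → ℝ)
    (θ θ' : Fin N → Fin d → ℝ)
    (θbar : Fin d → ℝ)
    (θbar' : Fin d → ℝ)
    (S : ℝ) (hS : S = ∑ i, (euclNorm (fun j => θ i j - θbar j)) ^ 2)
    (S' : ℝ) (hS' : S' = ∑ i, (euclNorm (fun j => θ' i j - θbar' j)) ^ 2)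
    (hdrift : euclNorm (θbar - θbar') ≤ 3 * ε * B * τ * (euclNorm θbar + Real.sqrt S' + 1))
    (w : Fin N → Fin d → ℝ)
    (hw : ∀ i, euclNorm (w i)
      ≤ L * (euclNorm (fun j => θ i j - θbar j) + euclNorm (fun j => θ' i j - θbar' j)
          + euclNorm (θbar - θbar'))) :
    edot (θbar' - θstar) (∑ i, w i)
      ≤ 48 * ε * τ * N * B * L * (euclNorm (θbar - θstar)) ^ 2
        + α / 2 * (euclNorm (θbar - θstar)) ^ 2
        + (N * L ^ 2 / α + L / 2) * S
        + (4 * N * L ^ 2 / α + 5 * L) * S'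
        + 45 * ε * τ * N * B * L / 2 * (2 * (euclNorm θstar) ^ 2 + 1) := by
  subst hS hS'
  have : Nonempty (Fin N) := Fin.pos_iff_nonempty.mp hN
  have key := inner_cross_terms_le (F := EuclideanSpace ℝ (Fin d)) hL.le hα
    (c := 3 * ε * B * τ) (by positivity) (by rw [Fintype.card_fin]; linarith)
    (WithLp.toLp 2 θstar) (WithLp.toLp 2 θbar) (WithLp.toLp 2 θbar')
    (fun i => WithLp.toLp 2 fun j => θ i j - θbar j)
    (fun i => WithLp.toLp 2 fun j => θ' i j - θbar' j) (fun i => WithLp.toLp 2 (w i)) hdrift hw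
  simp only [edot, euclNorm, WithLp.equiv_symm_apply, WithLp.toLp_sub, WithLp.toLp_sum,
    Fintype.card_fin] at key ⊢
  linarith

/-- Bound on the combined Lipschitz cross terms `T₃ + T₄ + T₅`:
`⟨θ̄' − θ*, ∑ wᵢ⟩ ≤ 48ετNBL·R + (α/2)R + (NL²/α + L/2) S + (4NL²/α + 5L) S'
  + (45ετNBL/2)(2‖θ*‖² + 1)`, where `R = ‖θ̄ − θ*‖²`. -/
theorem lipschitz_cross_terms_bound (N d : ℕ) (hN : 1 ≤ N) (hd : 1 ≤ d)
    (B L α ε : ℝ) (hB : 0 < B) (hL : 0 < L) (hα : 0 < α) (hε : 0 ≤ ε)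
    (τ : ℕ) (hτ : 1 ≤ τ) (hstep : 6 * N * B * τ * ε ≤ 1)
    (θstar : Fin d → ℝ)
    (θ θ' : Fin N → Fin d → ℝ)
    (θbar : Fin d → ℝ) (hθbar : θbar = fun j => (N : ℝ)⁻¹ * ∑ i, θ i j)
    (θbar' : Fin d → ℝ) (hθbar' : θbar' = fun j => (N : ℝ)⁻¹ * ∑ i, θ' i j)
    (S : ℝ) (hS : S = ∑ i, (euclNorm (fun j => θ i j - θbar j)) ^ 2)
    (S' : ℝ) (hS' : S' = ∑ i, (euclNorm (fun j => θ' i j - θbar' j)) ^ 2)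
    (hdrift : euclNorm (θbar - θbar') ≤ 3 * ε * B * τ * (euclNorm θbar + Real.sqrt S' + 1))
    (w : Fin N → Fin d → ℝ)
    (hw : ∀ i, euclNorm (w i)
      ≤ L * (euclNorm (fun j => θ i j - θbar j) + euclNorm (fun j => θ' i j - θbar' j)
          + euclNorm (θbar - θbar'))) :
    edot (θbar' - θstar) (∑ i, w i)
      ≤ 48 * ε * τ * N * B * L * (euclNorm (θbar - θstar)) ^ 2
        + α / 2 * (euclNorm (θbar - θstar)) ^ 2
        + (N * L ^ 2 / α + L / 2) * S
        + (4 * N * L ^ 2 / α + 5 * L) * S'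
        + 45 * ε * τ * N * B * L / 2 * (2 * (euclNorm θstar) ^ 2 + 1) :=
  lipschitz_cross_terms_bound_general N d hN B L α ε hB hL hα hε τ hstep θstar θ θ' θbar θbar' S hS
    S' hS' hdrift w hw
end

section
/- Let α > 0, ε > 0 with αε ≥ 8, let c ≥ 0, let τ ≥ 1 and ℓ, k be natural numbers with ℓ + τ ≤ k, and define the step sizes ε_t = ε/(t+1) for t ∈ ℕ. Assume ∑_{t=ℓ}^{ℓ+τ−1} c ε_t ≤ log 2 and α ε_t ≤ 8 for every t ≥ ℓ + τ. Then ( ∏_{t=ℓ}^{ℓ+τ−1} (1 + c ε_t) ) · ( ∏_{t=ℓ+τ}^{k−1} (1 − α ε_t / 8) ) ≤ 2(ℓ + τ + 1)/(k + 1). -/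
/-!
The warm-up product is at most `exp (∑ c ε_t) ≤ 2` by `1 + x ≤ exp x`. Since `α ε / 8 ≥ 1`, each later
factor satisfies `1 - (α ε / 8) / (t + 1) ≤ 1 - 1 / (t + 2) = (t + 1) / (t + 2)`, and these bounds
telescope to `(ℓ + τ + 1) / (k + 1)`.
-/

open Finset

theorem Finset.prod_Ico_div_succ_of_ne_zero {G : Type*} [CommGroupWithZero G] {f : ℕ → G}
    {m n : ℕ} (hmn : m ≤ n) (hf : ∀ i, f i ≠ 0) : ∏ i ∈ Ico m n, f i / f (i + 1) = f m / f n := by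
  induction n, hmn using Nat.le_induction with
  | base => rw [Ico_self, prod_empty, div_self (hf m)]
  | succ n hmn ih => rw [prod_Ico_succ_top hmn, ih, div_mul_div_cancel₀ (hf n)]

theorem prod_Ico_succ_div_succ_succ {m n : ℕ} (hmn : m ≤ n) :
    ∏ t ∈ Ico m n, ((t : ℝ) + 1) / ((t : ℝ) + 2) = ((m : ℝ) + 1) / ((n : ℝ) + 1) := by
  have h := prod_Ico_div_succ_of_ne_zero (f := fun i : ℕ ↦ (i : ℝ) + 1) hmn (fun i ↦ by positivity)
  simpa only [Nat.cast_add, Nat.cast_one, add_assoc, one_add_one_eq_two] using h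

theorem one_sub_div_le_succ_div_succ_succ {a : ℝ} (ha : 1 ≤ a) (t : ℕ) :
    1 - a / ((t : ℝ) + 1) ≤ ((t : ℝ) + 1) / ((t : ℝ) + 2) := by
  have ht : (0 : ℝ) < (t : ℝ) + 1 := by positivity
  calc 1 - a / ((t : ℝ) + 1) ≤ 1 - 1 / ((t : ℝ) + 2) := by
        gcongr 1 - ?_
        calc 1 / ((t : ℝ) + 2) ≤ 1 / ((t : ℝ) + 1) := by gcongr; linarith
          _ ≤ a / ((t : ℝ) + 1) := by gcongr
    _ = ((t : ℝ) + 1) / ((t : ℝ) + 2) := by field_simp; ring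

theorem prod_one_sub_div_le {a : ℝ} (ha : 1 ≤ a) {m n : ℕ} (hmn : m ≤ n)
    (hle : ∀ t ∈ Ico m n, a / ((t : ℝ) + 1) ≤ 1) :
    ∏ t ∈ Ico m n, (1 - a / ((t : ℝ) + 1)) ≤ ((m : ℝ) + 1) / ((n : ℝ) + 1) := by
  rw [← prod_Ico_succ_div_succ_succ hmn]
  exact prod_le_prod (fun t ht ↦ sub_nonneg.mpr (hle t ht))
    (fun t _ ↦ one_sub_div_le_succ_div_succ_succ ha t)

theorem prod_one_add_le_two {ι : Type*} (s : Finset ι) {x : ι → ℝ} (hx : ∀ i, 0 ≤ x i)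
    (hsum : ∑ i ∈ s, x i ≤ Real.log 2) : ∏ i ∈ s, (1 + x i) ≤ 2 :=
  calc ∏ i ∈ s, (1 + x i) ≤ Real.exp (∑ i ∈ s, x i) := Real.prod_one_add_le_exp_sum s hx
    _ ≤ Real.exp (Real.log 2) := Real.exp_le_exp.mpr hsum
    _ = 2 := Real.exp_log two_pos

theorem step_size_product_estimate_general (α ε c : ℝ) (hε : 0 < ε)
    (hαε : 8 ≤ α * ε) (hc : 0 ≤ c)
    (τ ℓ k : ℕ) (hℓk : ℓ + τ ≤ k)
    (hsum : ∑ t ∈ Finset.Ico ℓ (ℓ + τ), c * (ε / (t + 1)) ≤ Real.log 2)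
    (hsmall : ∀ t : ℕ, ℓ + τ ≤ t → α * (ε / (t + 1)) ≤ 8) :
    (∏ t ∈ Finset.Ico ℓ (ℓ + τ), (1 + c * (ε / (t + 1))))
        * (∏ t ∈ Finset.Ico (ℓ + τ) k, (1 - α * (ε / (t + 1)) / 8))
      ≤ 2 * ((ℓ : ℝ) + τ + 1) / ((k : ℝ) + 1) := by
  have hrate (t : ℕ) : α * (ε / (t + 1)) / 8 = α * ε / 8 / ((t : ℝ) + 1) := by ring
  have hwarmup : ∏ t ∈ Ico ℓ (ℓ + τ), (1 + c * (ε / (t + 1))) ≤ 2 :=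
    prod_one_add_le_two _ (fun t ↦ by positivity) hsum
  have hdecay : ∏ t ∈ Ico (ℓ + τ) k, (1 - α * (ε / (t + 1)) / 8)
      ≤ (((ℓ + τ : ℕ) : ℝ) + 1) / ((k : ℝ) + 1) := by
    simp only [hrate]
    refine prod_one_sub_div_le (by linarith) hℓk fun t ht ↦ ?_
    have := hsmall t (mem_Ico.mp ht).1
    rw [← hrate]
    linarith
  have hdecay_nonneg : 0 ≤ ∏ t ∈ Ico (ℓ + τ) k, (1 - α * (ε / (t + 1)) / 8) :=
    prod_nonneg fun t ht ↦ by linarith [hsmall t (mem_Ico.mp ht).1]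
  calc _ ≤ 2 * ((((ℓ + τ : ℕ) : ℝ) + 1) / ((k : ℝ) + 1)) :=
        mul_le_mul hwarmup hdecay hdecay_nonneg zero_le_two
    _ = 2 * ((ℓ : ℝ) + τ + 1) / ((k : ℝ) + 1) := by push_cast; ring

/-- Product estimate for the diminishing step sizes `ε_t = ε/(t+1)`:
`(∏_{t=ℓ}^{ℓ+τ−1} (1 + c ε_t)) (∏_{t=ℓ+τ}^{k−1} (1 − α ε_t/8)) ≤ 2(ℓ+τ+1)/(k+1)`. -/
theorem step_size_product_estimate (α ε c : ℝ) (hα : 0 < α) (hε : 0 < ε)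
    (hαε : 8 ≤ α * ε) (hc : 0 ≤ c)
    (τ ℓ k : ℕ) (hτ : 1 ≤ τ) (hℓk : ℓ + τ ≤ k)
    (hsum : ∑ t ∈ Finset.Ico ℓ (ℓ + τ), c * (ε / (t + 1)) ≤ Real.log 2)
    (hsmall : ∀ t : ℕ, ℓ + τ ≤ t → α * (ε / (t + 1)) ≤ 8) :
    (∏ t ∈ Finset.Ico ℓ (ℓ + τ), (1 + c * (ε / (t + 1))))
        * (∏ t ∈ Finset.Ico (ℓ + τ) k, (1 - α * (ε / (t + 1)) / 8))
      ≤ 2 * ((ℓ : ℝ) + τ + 1) / ((k : ℝ) + 1) :=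
  step_size_product_estimate_general α ε c hε hαε hc τ ℓ k hℓk hsum hsmall
end
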